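/- Let ρ_sep be the two-qubit state (1/4)·[[1,0,0,0],[0,1,1,0],[0,1,1,0],[0,0,0,1]]. There is no decomposition ρ_sep = ∑_k q_k |χ_k⟩⟨χ_k| in which every |χ_k⟩ is both a product state |a_k⟩⊗|b_k⟩ and an eigenstate of the total particle number operator N = N_A⊗1 + 1⊗N_B (where N_A|0⟩=0, N_A|1⟩=|1⟩, similarly N_B). -/
import Mathlib


open Matrix

/-- Outer product `|ψ⟩⟨ψ|`. -/
noncomputable def outer {ι : Type*} (ψ : ι → ℂ) : Matrix ι ι ℂ :=
  Matrix.of fun a b => ψ a * star (ψ b)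

/-- The separable-but-nonlocal state `ρ_sep`. -/
noncomputable def rhoSep : Matrix (Fin 2 × Fin 2) (Fin 2 × Fin 2) ℂ :=
  Matrix.of fun p q =>
    if p = q ∧ (p = (0, 0) ∨ p = (1, 1)) then (1 / 4 : ℂ)
    else if (p = (0, 1) ∨ p = (1, 0)) ∧ (q = (0, 1) ∨ q = (1, 0)) then (1 / 4 : ℂ)
    else 0

/-- `ρ_sep` has no pure-state decomposition in which every state is both a
product state and an eigenstate of the total particle number
`N = N_A ⊗ 1 + 1 ⊗ N_B`: it cannot be created locally under the SSR. -/
theorem rhoSep_no_local_ssr_decomposition :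
    ¬ ∃ (k : ℕ) (q : Fin k → ℝ) (χ : Fin k → Fin 2 × Fin 2 → ℂ),
      (∀ i, 0 ≤ q i) ∧
      rhoSep = ∑ i, (q i : ℂ) • outer (χ i) ∧
      (∀ i, (∃ a b : Fin 2 → ℂ, χ i = fun p => a p.1 * b p.2) ∧
            (∃ c : ℕ, ∀ p : Fin 2 × Fin 2,
              (p.1 : ℕ) + (p.2 : ℕ) ≠ c → χ i p = 0)) := by
  rintro ⟨k, q, χ, hq, hρ, hχ⟩
  have hzero : ∀ i, χ i (0, 1) = 0 ∨ χ i (1, 0) = 0 := by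
    intro i
    obtain ⟨⟨a, b, hab⟩, c, hc⟩ := hχ i
    rcases eq_or_ne c 1 with h1 | h1
    · have h00 : χ i (0, 0) = 0 := hc (0, 0) (by simp [h1])
      have h11 : χ i (1, 1) = 0 := hc (1, 1) (by simp [Fin.val]; omega)
      have hm : χ i (0, 1) * χ i (1, 0) = χ i (0, 0) * χ i (1, 1) := by
        simp only [hab]; ring
      rw [h00, h11, mul_zero] at hm
      exact mul_eq_zero.mp hm
    · left; exact hc (0, 1) (by simpa using (Ne.symm h1))
  have h := congrFun (congrFun hρ ((0 : Fin 2), (1 : Fin 2))) ((1 : Fin 2), (0 : Fin 2))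
  have hL : rhoSep ((0 : Fin 2), (1 : Fin 2)) ((1 : Fin 2), (0 : Fin 2)) = 1 / 4 := by
    simp [rhoSep]
  have hR : (∑ i, (q i : ℂ) • outer (χ i)) ((0 : Fin 2), (1 : Fin 2))
      ((1 : Fin 2), (0 : Fin 2)) = 0 := by
    rw [Matrix.sum_apply]
    refine Finset.sum_eq_zero fun i _ => ?_
    rcases hzero i with h0 | h0 <;>
      simp [outer, Matrix.smul_apply, h0]
  rw [hL, hR] at h
  norm_num at h
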